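/- Let Φ be a semi-coherent structure function on n ≥ 1 components with structural signature s, let T_1,…,T_n be i.i.d. exponential random variables with rate μ > 0, let T_fail := inf{ t ≥ 0 : Φ(1{T_1 > t},…,1{T_n > t}) = 0 }, and fix r ∈ {1,…,n}. Set T_rep := min{T_fail, T_{r:n}} and let N(T_rep) := #{ i : T_i ≤ T_rep } be the number of failed components at the first repair. Given repair costs c_cmp : {1,…,n} → ℝ and c_sys ∈ ℝ, define the first-cycle cost C := c_cmp(N(T_rep)) + c_sys·1{T_fail ≤ T_{r:n}}. Then E[C] = Σ_{k=1}^{r} s_k·( c_sys + c_cmp(k) ) + ( Σ_{k=r+1}^{n} s_k )·c_cmp(r). -/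

import Mathlib

/-!
Almost surely the lifetimes are positive and pairwise distinct, so exactly one failure order `π`
(the permutation with `T ∘ π` strictly increasing) occurs, and by exchangeability each of the
`n!` orders has probability `1 / n!`. Along a fixed order the system fails at the `K(π)`-th
component failure; the failure time and `T_{r:n}` are both entries of `T ∘ π`, so the cost is
`c_sys + c_cmp K` if `K ≤ r` and `c_cmp r` otherwise. Each working state with `k` failed
components arises after the first `k` failures of exactly `k! (n - k)!` orders, so the system
survives `k` failures for `n! · S̄_k` orders, and `K(π) = k` for `n! · s_k` of them.
-/

open MeasureTheory ProbabilityTheory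

/-- `S̄ k`: the proportion of states with exactly `k` failed components in which
the system works. -/
noncomputable def Sbar (n : ℕ) (Φ : (Fin n → Bool) → Bool) (k : ℕ) : ℝ :=
  ((Finset.univ.filter (fun x : Fin n → Bool =>
      (Finset.univ.filter (fun i => x i = false)).card = k ∧ Φ x = true)).card : ℝ) /
    (n.choose k : ℝ)

/-- The structural signature `s k = S̄_{k-1} - S̄_k`. -/
noncomputable def structSig (n : ℕ) (Φ : (Fin n → Bool) → Bool) (k : ℕ) : ℝ :=
  Sbar n Φ (k - 1) - Sbar n Φ k

/-- The `k`-th order statistic (`k : Fin n`, 0-based) of a tuple `x : Fin n → ℝ`. -/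
noncomputable def orderStat (n : ℕ) (x : Fin n → ℝ) (k : Fin n) : ℝ :=
  x (Tuple.sort x k)

/-- The system failure time: the first nonnegative time at which the structure
function evaluated at the vector of component states (component `i` works at time `t`
iff `t < x i`) is `0`. -/
noncomputable def failTime (n : ℕ) (Φ : (Fin n → Bool) → Bool) (x : Fin n → ℝ) : ℝ :=
  sInf {t : ℝ | 0 ≤ t ∧ Φ (fun i => decide (t < x i)) = false}

namespace Reliability

open Finset
open scoped Nat

variable {n : ℕ}

theorem card_perm_comp_eq {α β : Type*} [Fintype α] [DecidableEq α] [Fintype β] [DecidableEq β]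
    {f g : α → β} (hfg : ∀ b, Fintype.card {a // f a = b} = Fintype.card {a // g a = b}) :
    #{σ : Equiv.Perm α | f ∘ σ = g} = ∏ b, (Fintype.card {a // f a = b})! := by
  obtain ⟨σ₀, hσ₀⟩ : ∃ σ₀ : Equiv.Perm α, f ∘ σ₀ = g :=
    ⟨Equiv.ofFiberEquiv fun b => (Fintype.equivOfCardEq (hfg b)).symm,
      funext (Equiv.ofFiberEquiv_map _)⟩
  -- right multiplication by `σ₀⁻¹` identifies these permutations with the stabiliser of `f`
  rw [← DomMulAct.stabilizer_card f, ← Fintype.card_subtype, ← hσ₀]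
  exact Fintype.card_congr <| (Equiv.mulRight σ₀⁻¹).subtypeEquiv fun σ => by
    constructor <;> intro h <;> funext a
    · simpa using congrFun h (σ₀⁻¹ a)
    · simpa using congrFun h (σ₀ a)

theorem card_fiber_of_card_false {y : Fin n → Bool} {k : ℕ} (hy : #{i | y i = false} = k)
    (b : Bool) : Fintype.card {i // y i = b} = if b then n - k else k := by
  have hsplit := card_filter_add_card_filter_not (s := univ) fun i => y i = true
  cases b <;> simp_all [Fintype.card_subtype]
  omega

/-- The state in which the components `π 0, …, π (k - 1)` have failed and the others work. -/
def stateAfter (π : Equiv.Perm (Fin n)) (k : ℕ) : Fin n → Bool :=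
  fun i => decide (k ≤ (π.symm i : ℕ))

theorem card_stateAfter_false (π : Equiv.Perm (Fin n)) {k : ℕ} (hk : k ≤ n) :
    #{i | stateAfter π k i = false} = k := by
  rw [card_equiv π.symm (t := {j : Fin n | (j : ℕ) < k}) (by simp [stateAfter]),
    Fin.card_filter_val_lt, min_eq_right hk]

theorem card_perm_stateAfter_eq {k : ℕ} (hk : k ≤ n) {y : Fin n → Bool}
    (hy : #{i | y i = false} = k) :
    #{π : Equiv.Perm (Fin n) | stateAfter π k = y} = k ! * (n - k)! := by
  have hstate (π : Equiv.Perm (Fin n)) : stateAfter π k = y ↔ y ∘ π = stateAfter 1 k := by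
    change stateAfter 1 k ∘ π.symm = y ↔ _
    rw [Equiv.comp_symm_eq, eq_comm]
  rw [filter_congr fun π _ => hstate π, card_perm_comp_eq fun b => by
    rw [card_fiber_of_card_false hy, card_fiber_of_card_false (card_stateAfter_false 1 hk)]]
  simp [card_fiber_of_card_false hy, mul_comm]

theorem card_perm_working_eq (Φ : (Fin n → Bool) → Bool) {k : ℕ} (hk : k ≤ n) :
    (#{π : Equiv.Perm (Fin n) | Φ (stateAfter π k) = true} : ℝ) = Sbar n Φ k * n ! := by
  set working : Finset (Fin n → Bool) := {y | #{i | y i = false} = k ∧ Φ y = true}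
  have hfiber : ∀ y ∈ working,
      #{π ∈ ({π | Φ (stateAfter π k) = true} : Finset (Equiv.Perm (Fin n))) |
        stateAfter π k = y} = k ! * (n - k)! := fun y hy => by
    simp only [working, mem_filter, mem_univ, true_and] at hy
    rw [filter_filter, ← card_perm_stateAfter_eq hk hy.1]
    congr 1
    exact filter_congr fun π _ => ⟨And.right, fun h => ⟨h ▸ hy.2, h⟩⟩
  rw [card_eq_sum_card_fiberwise (t := working) (f := (stateAfter · k)) fun π hπ => by
      simp_all [working, card_stateAfter_false π hk],
    sum_congr rfl hfiber, sum_const, smul_eq_mul, Sbar,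
    ← Nat.choose_mul_factorial_mul_factorial hk]
  have hchoose : (n.choose k : ℝ) ≠ 0 := by exact_mod_cast (Nat.choose_pos hk).ne'
  push_cast
  field_simp
  ring

theorem stateAfter_antitone (π : Equiv.Perm (Fin n)) : Antitone (stateAfter π) :=
  fun k l hkl i => by
    by_cases h : l ≤ (π.symm i : ℕ)
    · simp [stateAfter, h, hkl.trans h]
    · simp [stateAfter, h]

theorem stateAfter_zero (π : Equiv.Perm (Fin n)) : stateAfter π 0 = fun _ => true := by
  funext i; simp [stateAfter]

theorem stateAfter_self (π : Equiv.Perm (Fin n)) : stateAfter π n = fun _ => false := by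
  funext i; simp [stateAfter, (π.symm i).isLt]

/-- The number of component failures at which the system fails when the components fail in the
order `π 0, π 1, …`. -/
noncomputable def failIndex (Φ : (Fin n → Bool) → Bool) (π : Equiv.Perm (Fin n)) : ℕ :=
  sInf {k | Φ (stateAfter π k) = false}

section FailIndex

variable {Φ : (Fin n → Bool) → Bool} (hΦ : Monotone Φ) (hΦ0 : Φ (fun _ => false) = false)
  (π : Equiv.Perm (Fin n))
include hΦ hΦ0

theorem failIndex_le_iff {k : ℕ} : failIndex Φ π ≤ k ↔ Φ (stateAfter π k) = false := by
  have hne : n ∈ {k | Φ (stateAfter π k) = false} := by simpa [stateAfter_self] using hΦ0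
  refine ⟨fun h => ?_, fun h => Nat.sInf_le h⟩
  have hmem : Φ (stateAfter π (failIndex Φ π)) = false := Nat.sInf_mem ⟨n, hne⟩
  have hle := hΦ (stateAfter_antitone π h)
  rw [hmem] at hle
  exact le_antisymm hle (Bool.false_le _)

theorem lt_failIndex_iff {k : ℕ} : k < failIndex Φ π ↔ Φ (stateAfter π k) = true := by
  rw [← not_le, failIndex_le_iff hΦ hΦ0, Bool.not_eq_false]

theorem failIndex_le : failIndex Φ π ≤ n :=
  (failIndex_le_iff hΦ hΦ0 π).2 (by simpa [stateAfter_self] using hΦ0)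

theorem one_le_failIndex (hΦ1 : Φ (fun _ => true) = true) : 1 ≤ failIndex Φ π :=
  (lt_failIndex_iff hΦ hΦ0 π).2 (by simpa [stateAfter_zero] using hΦ1)

end FailIndex

theorem card_failIndex_eq {Φ : (Fin n → Bool) → Bool} (hΦ : Monotone Φ)
    (hΦ0 : Φ (fun _ => false) = false) {k : ℕ} (hk1 : 1 ≤ k) (hkn : k ≤ n) :
    (#{π : Equiv.Perm (Fin n) | failIndex Φ π = k} : ℝ) = structSig n Φ k * n ! := by
  let survivors (j : ℕ) : Finset (Equiv.Perm (Fin n)) := {π | j < failIndex Φ π}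
  have hcard (j : ℕ) (hj : j ≤ n) : (#(survivors j) : ℝ) = Sbar n Φ j * n ! := by
    simp only [survivors, lt_failIndex_iff hΦ hΦ0, card_perm_working_eq Φ hj]
  have hsub : survivors k ⊆ survivors (k - 1) := monotone_filter_right _ fun π h => by omega
  have heq : ({π | failIndex Φ π = k} : Finset _) = survivors (k - 1) \ survivors k := by
    ext π; simp only [survivors, mem_filter, mem_univ, true_and, mem_sdiff]; omega
  rw [heq, card_sdiff_of_subset hsub, Nat.cast_sub (card_le_card hsub), hcard _ (by omega),
    hcard _ hkn, structSig]
  ring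

theorem sum_perm_failIndex {Φ : (Fin n → Bool) → Bool} (hΦ : Monotone Φ)
    (hΦ0 : Φ (fun _ => false) = false) (hΦ1 : Φ (fun _ => true) = true) (g : ℕ → ℝ) :
    ∑ π : Equiv.Perm (Fin n), g (failIndex Φ π) =
      n ! * ∑ k ∈ Icc 1 n, structSig n Φ k * g k := by
  rw [← sum_fiberwise_of_maps_to (t := Icc 1 n) (g := failIndex Φ) fun π _ =>
    mem_Icc.2 ⟨one_le_failIndex hΦ hΦ0 π hΦ1, failIndex_le hΦ hΦ0 π⟩, mul_sum]
  refine sum_congr rfl fun k hk => ?_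
  obtain ⟨hk1, hkn⟩ := mem_Icc.1 hk
  rw [sum_congr rfl fun π hπ => by rw [(mem_filter.1 hπ).2], sum_const, nsmul_eq_mul,
    card_failIndex_eq hΦ hΦ0 hk1 hkn]
  ring

/-- The first-cycle cost when the system fails at the `k`-th component failure and the policy
repairs at the `r`-th one. -/
def cycleCost (ccmp : ℕ → ℝ) (csys : ℝ) (r k : ℕ) : ℝ :=
  if k ≤ r then csys + ccmp k else ccmp r

theorem sum_structSig_mul_cycleCost (Φ : (Fin n → Bool) → Bool) (ccmp : ℕ → ℝ)
    (csys : ℝ) {r : ℕ} (hrn : r ≤ n) :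
    ∑ k ∈ Icc 1 n, structSig n Φ k * cycleCost ccmp csys r k =
      (∑ k ∈ Icc 1 r, structSig n Φ k * (csys + ccmp k)) +
        (∑ k ∈ Icc (r + 1) n, structSig n Φ k) * ccmp r := by
  rw [Icc_add_one_left_eq_Ioc, ← zero_add 1, Icc_add_one_left_eq_Ioc, Icc_add_one_left_eq_Ioc,
    ← sum_Ioc_consecutive _ (Nat.zero_le r) hrn, sum_mul]
  congr 1 <;> refine sum_congr rfl fun k hk => ?_ <;> rw [mem_Ioc] at hk
  · rw [cycleCost, if_pos hk.2]
  · rw [cycleCost, if_neg hk.1.not_ge]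

section Deterministic

variable {x : Fin n → ℝ} {π : Equiv.Perm (Fin n)} (hx : StrictMono (x ∘ π))
include hx

theorem eq_sort_of_strictMono_comp : π = Tuple.sort x :=
  Tuple.eq_sort_iff.2 ⟨hx.monotone, fun _ _ hij heq => absurd heq (hx hij).ne⟩

theorem orderStat_eq_of_strictMono_comp (k : Fin n) : orderStat n x k = x (π k) := by
  rw [orderStat, ← eq_sort_of_strictMono_comp hx]

theorem lt_apply_iff_lt_symm (m i : Fin n) : x (π m) < x i ↔ m < π.symm i := by
  simpa using hx.lt_iff_lt (a := m) (b := π.symm i)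

theorem stateAt_eq_stateAfter (m : Fin n) :
    (fun i => decide (x (π m) < x i)) = stateAfter π (m + 1) := by
  funext i
  simp only [lt_apply_iff_lt_symm hx, stateAfter, Fin.lt_def, decide_eq_decide]
  omega

theorem card_le_apply_eq (m : Fin n) : #{i | x i ≤ x (π m)} = m + 1 := by
  rw [card_equiv π.symm (t := {j : Fin n | (j : ℕ) < m + 1}), Fin.card_filter_val_lt,
    min_eq_right m.isLt]
  intro i
  simp only [mem_filter, mem_univ, true_and, ← not_lt, lt_apply_iff_lt_symm hx, Fin.lt_def]
  omega

theorem failTime_eq {Φ : (Fin n → Bool) → Bool} (hΦ : Monotone Φ)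
    (hΦ0 : Φ (fun _ => false) = false) (hx0 : ∀ i, 0 ≤ x i) {m : Fin n}
    (hm : (m : ℕ) + 1 = failIndex Φ π) : failTime n Φ x = x (π m) := by
  refine IsLeast.csInf_eq ⟨⟨hx0 _, ?_⟩, fun t ⟨_, ht⟩ => ?_⟩
  · rw [stateAt_eq_stateAfter hx, hm, ← failIndex_le_iff hΦ hΦ0]
  · by_contra! hlt
    -- before time `x (π m)` at most the components `π 0, …, π (m - 1)` have failed
    have hworking : stateAfter π m ≤ fun i => decide (t < x i) := fun i => by
      by_cases hi : (m : ℕ) ≤ π.symm i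
      · have hle : x (π m) ≤ x i := by simpa using hx.monotone (a := m) (b := π.symm i) hi
        simp [stateAfter, hi, hlt.trans_le hle]
      · simp [stateAfter, hi]
    have hm_lt : (m : ℕ) < failIndex Φ π := by omega
    have hΦle := hΦ hworking
    rw [(lt_failIndex_iff hΦ hΦ0 π).1 hm_lt, ht] at hΦle
    exact absurd hΦle (by decide)

theorem firstCycleCost_eq {Φ : (Fin n → Bool) → Bool} (hΦ : Monotone Φ)
    (hΦ0 : Φ (fun _ => false) = false) (hΦ1 : Φ (fun _ => true) = true) (hx0 : ∀ i, 0 ≤ x i)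
    {r : ℕ} (hr1 : 1 ≤ r) (hrn : r ≤ n) (ccmp : ℕ → ℝ) (csys : ℝ) :
    ccmp #{i | x i ≤ min (failTime n Φ x) (orderStat n x ⟨r - 1, Nat.sub_one_lt_of_le hr1 hrn⟩)} +
        csys * (if failTime n Φ x ≤ orderStat n x ⟨r - 1, Nat.sub_one_lt_of_le hr1 hrn⟩
          then (1 : ℝ) else 0) =
      cycleCost ccmp csys r (failIndex Φ π) := by
  have hK1 := one_le_failIndex hΦ hΦ0 π hΦ1
  have hKn := failIndex_le hΦ hΦ0 π
  set K := failIndex Φ π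
  rw [failTime_eq hx hΦ hΦ0 hx0 (m := ⟨K - 1, by omega⟩) (Nat.sub_add_cancel hK1),
    orderStat_eq_of_strictMono_comp hx, cycleCost]
  by_cases hKr : K ≤ r
  · have hle : x (π ⟨K - 1, by omega⟩) ≤ x (π ⟨r - 1, by omega⟩) :=
      hx.monotone (Fin.mk_le_mk.2 (by omega))
    rw [if_pos hle, if_pos hKr, min_eq_left hle, card_le_apply_eq hx, Nat.sub_add_cancel hK1]
    ring
  · have hlt : x (π ⟨r - 1, by omega⟩) < x (π ⟨K - 1, by omega⟩) :=
      hx (Fin.mk_lt_mk.2 (by omega))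
    rw [if_neg hlt.not_ge, if_neg hKr, min_eq_right hlt.le, card_le_apply_eq hx,
      Nat.sub_add_cancel hr1]
    ring

end Deterministic

instance nullSingletonClass_expMeasure (r : ℝ) : NullSingletonClass (expMeasure r) := by
  unfold expMeasure gammaMeasure; infer_instance

theorem measurableSet_strictMono : MeasurableSet {x : Fin n → ℝ | StrictMono x} := by
  have hinter : {x : Fin n → ℝ | StrictMono x} = ⋂ i, ⋂ j, ⋂ (_ : i < j), {x | x i < x j} := by
    ext x; simp [StrictMono]
  rw [hinter]
  exact .iInter fun i => .iInter fun j => .iInter fun _ =>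
    measurableSet_lt (measurable_pi_apply i) (measurable_pi_apply j)

section Probability

variable {Ω : Type*} [MeasurableSpace Ω] {P : Measure Ω}

theorem map_eq_expMeasure [IsProbabilityMeasure P] {X : Ω → ℝ} (hX : Measurable X) {μ : ℝ}
    (hμ : 0 < μ) (hexp : ∀ t, 0 ≤ t → P {ω | t < X ω} = ENNReal.ofReal (Real.exp (-μ * t))) :
    P.map X = expMeasure μ := by
  have := isProbabilityMeasure_expMeasure hμ
  have := Measure.isProbabilityMeasure_map (μ := P) hX.aemeasurable
  have hIic {t : ℝ} (ht : 0 ≤ t) :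
      P.map X (Set.Iic t) = ENNReal.ofReal (1 - Real.exp (-μ * t)) := by
    rw [Measure.map_apply hX measurableSet_Iic, ← Set.compl_Ioi, Set.preimage_compl,
      prob_compl_eq_one_sub (hX measurableSet_Ioi), ENNReal.ofReal_sub _ (Real.exp_pos _).le,
      ENNReal.ofReal_one, ← hexp t ht]
    rfl
  refine Measure.ext_of_Iic _ _ fun t => ?_
  rw [← ofReal_cdf (expMeasure μ), cdf_expMeasure_eq hμ]
  split_ifs with ht
  · rw [hIic ht, neg_mul]
  · rw [ENNReal.ofReal_zero, ← nonpos_iff_eq_zero]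
    calc P.map X (Set.Iic t) ≤ P.map X (Set.Iic 0) :=
          measure_mono (Set.Iic_subset_Iic.2 (by linarith))
      _ = 0 := by simp [hIic le_rfl]

theorem measure_eq_eq_zero_of_indepFun [IsFiniteMeasure P] {α : Type*} [MeasurableSpace α]
    [MeasurableEq α] {X Y : Ω → α} (hX : Measurable X) (hY : Measurable Y) (hXY : IndepFun X Y P)
    [NullSingletonClass (P.map Y)] : P {ω | X ω = Y ω} = 0 := by
  have hlaw := (indepFun_iff_map_prod_eq_prod_map_map hX.aemeasurable hY.aemeasurable).1 hXY
  have hslice (a : α) : Prod.mk a ⁻¹' Set.diagonal α = {a} := by ext; simp [eq_comm]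
  rw [show {ω | X ω = Y ω} = (fun ω => (X ω, Y ω)) ⁻¹' Set.diagonal α from rfl,
    ← Measure.map_apply (hX.prodMk hY) measurableSet_diagonal, hlaw,
    Measure.prod_apply measurableSet_diagonal]
  simp [hslice]

theorem integral_eq_sum_of_ae_partition [IsFiniteMeasure P] {ι : Type*} [Fintype ι]
    {B : ι → Set Ω} (hB : ∀ i, MeasurableSet (B i))
    (hdisj : Pairwise fun i j => Disjoint (B i) (B j)) (hcover : ∀ᵐ ω ∂P, ω ∈ ⋃ i, B i)
    {f : Ω → ℝ} {c : ι → ℝ} (hf : ∀ i, ∀ᵐ ω ∂P, ω ∈ B i → f ω = c i) :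
    ∫ ω, f ω ∂P = ∑ i, P.real (B i) * c i := by
  have hfB (i : ι) : f =ᵐ[P.restrict (B i)] fun _ => c i := (ae_restrict_iff' (hB i)).2 (hf i)
  rw [integral_eq_setIntegral hcover, integral_iUnion_fintype hB hdisj
    fun i => (integrableOn_const (measure_ne_top _ _)).congr_fun_ae (hfB i).symm]
  refine Finset.sum_congr rfl fun i _ => ?_
  rw [integral_congr_ae (hfB i), setIntegral_const, smul_eq_mul]

end Probability

def failsInOrder {Ω : Type*} (T : Fin n → Ω → ℝ) (π : Equiv.Perm (Fin n)) : Set Ω :=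
  {ω | StrictMono fun i => T (π i) ω}

theorem pairwise_disjoint_failsInOrder {Ω : Type*} (T : Fin n → Ω → ℝ) :
    Pairwise fun π π' : Equiv.Perm (Fin n) => Disjoint (failsInOrder T π) (failsInOrder T π') :=
  fun _ _ hne => Set.disjoint_left.2 fun ω h h' =>
    hne ((eq_sort_of_strictMono_comp (x := (T · ω)) h).trans
      (eq_sort_of_strictMono_comp (x := (T · ω)) h').symm)

section Lifetimes

variable {Ω : Type*} [MeasurableSpace Ω] {P : Measure Ω} [IsProbabilityMeasure P]
  {T : Fin n → Ω → ℝ}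

variable (hmeas : ∀ i, Measurable (T i))
include hmeas

theorem measurableSet_failsInOrder (π : Equiv.Perm (Fin n)) :
    MeasurableSet (failsInOrder T π) :=
  measurable_pi_lambda _ (fun i => hmeas (π i)) measurableSet_strictMono

variable {μ : ℝ} (hexp : ∀ i t, 0 ≤ t → P {ω | t < T i ω} = ENNReal.ofReal (Real.exp (-μ * t)))
include hexp

theorem ae_forall_nonneg : ∀ᵐ ω ∂P, ∀ i, 0 ≤ T i ω := by
  refine ae_all_iff.2 fun i => ?_
  have hpos : ∀ᵐ ω ∂P, 0 < T i ω :=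
    (ae_iff_prob_eq_one (measurable_const.lt (hmeas i))).2 (by simpa using hexp i 0 le_rfl)
  exact hpos.mono fun ω h => h.le

variable (hμ : 0 < μ) (hindep : iIndepFun T P)
include hμ hindep

theorem ae_mem_iUnion_failsInOrder : ∀ᵐ ω ∂P, ω ∈ ⋃ π, failsInOrder T π := by
  have hlaw (i : Fin n) : P.map (T i) = expMeasure μ := map_eq_expMeasure (hmeas i) hμ (hexp i)
  have hne (i j : Fin n) : ∀ᵐ ω ∂P, i ≠ j → T i ω ≠ T j ω := by
    by_cases hij : i = j
    · simp [hij]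
    · have : NullSingletonClass (P.map (T j)) := by rw [hlaw]; infer_instance
      simpa [hij, ae_iff] using
        measure_eq_eq_zero_of_indepFun (hmeas i) (hmeas j) (hindep.indepFun hij)
  filter_upwards [ae_all_iff.2 fun i => ae_all_iff.2 (hne i)] with ω hω
  have hinj : Function.Injective fun i => T i ω := fun i j h => by_contra fun hij => hω i j hij h
  exact Set.mem_iUnion.2 ⟨Tuple.sort _,
    (Tuple.monotone_sort _).strictMono_of_injective (hinj.comp (Equiv.injective _))⟩

theorem map_perm_eq_pi (π : Equiv.Perm (Fin n)) :
    P.map (fun ω i => T (π i) ω) = Measure.pi fun _ => expMeasure μ := by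
  rw [(iIndepFun_iff_map_fun_eq_pi_map fun i => (hmeas (π i)).aemeasurable).1
    (hindep.precomp π.injective)]
  simp_rw [map_eq_expMeasure (hmeas _) hμ (hexp _)]

theorem measureReal_failsInOrder (π : Equiv.Perm (Fin n)) :
    P.real (failsInOrder T π) = (n ! : ℝ)⁻¹ := by
  have := isProbabilityMeasure_expMeasure hμ
  set p := (Measure.pi fun _ : Fin n => expMeasure μ).real {x | StrictMono x}
  have hp (π : Equiv.Perm (Fin n)) : P.real (failsInOrder T π) = p := by
    rw [measureReal_def, failsInOrder, ← Set.preimage_ofPred_eq,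
      ← Measure.map_apply (measurable_pi_lambda _ fun i => hmeas (π i)) measurableSet_strictMono,
      map_perm_eq_pi hmeas hexp hμ hindep]
    rfl
  have hsum : ∑ π, P.real (failsInOrder T π) = 1 := by
    rw [← measureReal_iUnion_fintype (μ := P) (pairwise_disjoint_failsInOrder T)
      (measurableSet_failsInOrder hmeas), measureReal_def,
      (mem_ae_iff_prob_eq_one (.iUnion (measurableSet_failsInOrder hmeas))).1
        (ae_mem_iUnion_failsInOrder hmeas hexp hμ hindep), ENNReal.toReal_one]
  simp only [hp, sum_const, card_univ, Fintype.card_perm, Fintype.card_fin, nsmul_eq_mul] at hsum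
  rw [hp, eq_inv_of_mul_eq_one_right hsum]

end Lifetimes

end Reliability

open Reliability

/-- Expected first-cycle cost under the `r`-out-of-`n`:R policy for a semi-coherent
system with i.i.d. exponential component lifetimes:
`E[c_cmp(N(T_rep)) + c_sys·1{T_fail ≤ T_{r:n}}]
  = Σ_{k=1}^{r} s_k (c_sys + c_cmp k) + (Σ_{k=r+1}^{n} s_k) c_cmp r`,
where `T_rep = min{T_fail, T_{r:n}}` and `N(T_rep) = #{i : T_i ≤ T_rep}`. -/
theorem stmt15 {Ω : Type*} [MeasurableSpace Ω] (Pr : Measure Ω) [IsProbabilityMeasure Pr]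
    (n : ℕ) (Φ : (Fin n → Bool) → Bool)
    (hmono : ∀ x y : Fin n → Bool, (∀ i, x i ≤ y i) → Φ x ≤ Φ y)
    (hΦ0 : Φ (fun _ => false) = false) (hΦ1 : Φ (fun _ => true) = true)
    (μ : ℝ) (hμ : 0 < μ)
    (T : Fin n → Ω → ℝ)
    (hmeas : ∀ i, Measurable (T i))
    (hindep : iIndepFun T Pr)
    (hexp : ∀ (i : Fin n) (t : ℝ), 0 ≤ t →
      Pr {ω | t < T i ω} = ENNReal.ofReal (Real.exp (-μ * t)))
    (r : ℕ) (hr1 : 1 ≤ r) (hrn : r ≤ n)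
    (ccmp : ℕ → ℝ) (csys : ℝ) :
    ∫ ω,
        (ccmp ((Finset.univ.filter (fun i : Fin n =>
            T i ω ≤ min (failTime n Φ (fun i' => T i' ω))
              (orderStat n (fun i' => T i' ω) ⟨r - 1, by omega⟩))).card) +
          csys * (if failTime n Φ (fun i' => T i' ω) ≤
              orderStat n (fun i' => T i' ω) ⟨r - 1, by omega⟩ then (1 : ℝ) else 0)) ∂Pr =
      (∑ k ∈ Finset.Icc 1 r, structSig n Φ k * (csys + ccmp k)) +
        (∑ k ∈ Finset.Icc (r + 1) n, structSig n Φ k) * ccmp r := by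
  have hΦ : Monotone Φ := fun x y h => hmono x y h
  rw [integral_eq_sum_of_ae_partition (measurableSet_failsInOrder hmeas)
    (pairwise_disjoint_failsInOrder T) (ae_mem_iUnion_failsInOrder hmeas hexp hμ hindep)
    (c := fun π => cycleCost ccmp csys r (failIndex Φ π)) fun π =>
      (ae_forall_nonneg hmeas hexp).mono fun ω h0 hω =>
        firstCycleCost_eq (x := (T · ω)) hω hΦ hΦ0 hΦ1 h0 hr1 hrn ccmp csys]
  simp_rw [measureReal_failsInOrder hmeas hexp hμ hindep, ← Finset.mul_sum,
    sum_perm_failIndex hΦ hΦ0 hΦ1, sum_structSig_mul_cycleCost Φ ccmp csys hrn]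
  field_simp
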